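/- arXiv:2304.11535 — 2 statements merged into one kernel-verified Lean document; each statement's English description precedes it below -/
import Mathlib

section
/- Suppose n is a smooth solution of ∂_tt n_i − ∂_x(c²(n₁) ∂_x n_i) = (−|n_t|² + (2c²(n₁) − ζ_i)|n_x|²) n_i for i = 1,2,3, with c²(n₁) = α + (γ−α)n₁², ζ₁ = γ, ζ₂ = ζ₃ = α. Then with R = n_t + c n_x, S = n_t − c n_x, each component satisfies ∂_t R_i − c ∂_x R_i = (1/(4c²))((c²−ζ_i)(|R|²+|S|²) − 2(3c²−ζ_i)R·S) n_i + (c'/(2c))(R_i − S_i)R₁. -/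
/-!
For `a = c ∘ n₁` and any C² function `u`, expanding and using `∂_t∂_x u = ∂_x∂_t u`
gives `(∂_t − a ∂_x)(u_t + a u_x) = u_tt − ∂_x(a² u_x) + (a_t + a a_x) u_x`.
The wave equation evaluates the first two terms, the chain rule gives
`a_t + a a_x = c'(n₁)(∂_t n₁ + c ∂_x n₁) = c' R₁`, and substituting `n_t = (R + S)/2`,
`n_x = (R − S)/(2c)` turns the source term into the stated quadratic form in `R` and `S`.
-/

open scoped BigOperators

/-- Partial derivative in the first (time) variable of a curried function. -/
noncomputable def ptd (f : ℝ → ℝ → ℝ) (t x : ℝ) : ℝ := deriv (fun τ => f τ x) t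

/-- Partial derivative in the second (space) variable of a curried function. -/
noncomputable def pxd (f : ℝ → ℝ → ℝ) (t x : ℝ) : ℝ := deriv (fun y => f t y) x

open Function

section PartialDerivatives

variable {f : ℝ → ℝ → ℝ}

lemma hasDerivAt_ptd_of_differentiableAt {t x : ℝ}
    (hf : DifferentiableAt ℝ (uncurry f) (t, x)) :
    HasDerivAt (fun τ => f τ x) (fderiv ℝ (uncurry f) (t, x) (1, 0)) t := by
  exact hf.hasFDerivAt.comp_hasDerivAt t ((hasDerivAt_id t).prodMk (hasDerivAt_const t x))

lemma hasDerivAt_pxd_of_differentiableAt {t x : ℝ}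
    (hf : DifferentiableAt ℝ (uncurry f) (t, x)) :
    HasDerivAt (fun y => f t y) (fderiv ℝ (uncurry f) (t, x) (0, 1)) x := by
  exact hf.hasFDerivAt.comp_hasDerivAt x ((hasDerivAt_const x t).prodMk (hasDerivAt_id x))

lemma ptd_eq_fderiv {t x : ℝ} (hf : DifferentiableAt ℝ (uncurry f) (t, x)) :
    ptd f t x = fderiv ℝ (uncurry f) (t, x) (1, 0) :=
  (hasDerivAt_ptd_of_differentiableAt hf).deriv

lemma pxd_eq_fderiv {t x : ℝ} (hf : DifferentiableAt ℝ (uncurry f) (t, x)) :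
    pxd f t x = fderiv ℝ (uncurry f) (t, x) (0, 1) :=
  (hasDerivAt_pxd_of_differentiableAt hf).deriv

lemma hasDerivAt_ptd {t x : ℝ} (hf : DifferentiableAt ℝ (uncurry f) (t, x)) :
    HasDerivAt (fun τ => f τ x) (ptd f t x) t :=
  ptd_eq_fderiv hf ▸ hasDerivAt_ptd_of_differentiableAt hf

lemma hasDerivAt_pxd {t x : ℝ} (hf : DifferentiableAt ℝ (uncurry f) (t, x)) :
    HasDerivAt (fun y => f t y) (pxd f t x) x :=
  pxd_eq_fderiv hf ▸ hasDerivAt_pxd_of_differentiableAt hf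

lemma uncurry_ptd (hf : Differentiable ℝ (uncurry f)) :
    uncurry (ptd f) = fun p => fderiv ℝ (uncurry f) p (1, 0) :=
  funext fun p => ptd_eq_fderiv (hf p)

lemma uncurry_pxd (hf : Differentiable ℝ (uncurry f)) :
    uncurry (pxd f) = fun p => fderiv ℝ (uncurry f) p (0, 1) :=
  funext fun p => pxd_eq_fderiv (hf p)

variable {k : WithTop ℕ∞}

lemma contDiff_uncurry_ptd (hf : ContDiff ℝ (k + 1) (uncurry f)) :
    ContDiff ℝ k (uncurry (ptd f)) := by
  rw [uncurry_ptd (hf.differentiable (by simp))]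
  exact (hf.fderiv_right le_rfl).clm_apply contDiff_const

lemma contDiff_uncurry_pxd (hf : ContDiff ℝ (k + 1) (uncurry f)) :
    ContDiff ℝ k (uncurry (pxd f)) := by
  rw [uncurry_pxd (hf.differentiable (by simp))]
  exact (hf.fderiv_right le_rfl).clm_apply contDiff_const

lemma ptd_pxd_comm (hf : ContDiff ℝ 2 (uncurry f)) (t x : ℝ) :
    ptd (pxd f) t x = pxd (ptd f) t x := by
  have hf' : Differentiable ℝ (uncurry f) := hf.differentiable (by simp)
  have hd : Differentiable ℝ (fderiv ℝ (uncurry f)) :=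
    (hf.fderiv_right (m := 1) (by norm_num)).differentiable (by simp)
  rw [ptd_eq_fderiv ((contDiff_uncurry_pxd (k := 1) hf).differentiable (by simp) _),
    pxd_eq_fderiv ((contDiff_uncurry_ptd (k := 1) hf).differentiable (by simp) _),
    uncurry_ptd hf', uncurry_pxd hf', fderiv_clm_apply (hd _) (differentiableAt_const _),
    fderiv_clm_apply (hd _) (differentiableAt_const _)]
  simpa using (hf.contDiffAt.isSymmSndFDerivAt (by simp) (0, 1) (1, 0)).symm

lemma ptd_comp {g : ℝ → ℝ} {g' t x : ℝ} (hg : HasDerivAt g g' (f t x))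
    (hf : DifferentiableAt ℝ (uncurry f) (t, x)) :
    ptd (fun t x => g (f t x)) t x = g' * ptd f t x :=
  (hg.comp t (hasDerivAt_ptd hf)).deriv

lemma pxd_comp {g : ℝ → ℝ} {g' t x : ℝ} (hg : HasDerivAt g g' (f t x))
    (hf : DifferentiableAt ℝ (uncurry f) (t, x)) :
    pxd (fun t x => g (f t x)) t x = g' * pxd f t x :=
  (hg.comp x (hasDerivAt_pxd hf)).deriv

end PartialDerivatives

theorem ptd_sub_mul_pxd_riemannVariable {u a : ℝ → ℝ → ℝ}
    (hu : ContDiff ℝ 2 (uncurry u)) (ha : Differentiable ℝ (uncurry a)) (t x : ℝ) :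
    ptd (fun t x => ptd u t x + a t x * pxd u t x) t x
        - a t x * pxd (fun t x => ptd u t x + a t x * pxd u t x) t x
      = ptd (ptd u) t x - pxd (fun t x => a t x ^ 2 * pxd u t x) t x
        + (ptd a t x + a t x * pxd a t x) * pxd u t x := by
  have hut : Differentiable ℝ (uncurry (ptd u)) :=
    (contDiff_uncurry_ptd (k := 1) hu).differentiable (by simp)
  have hux : Differentiable ℝ (uncurry (pxd u)) :=
    (contDiff_uncurry_pxd (k := 1) hu).differentiable (by simp)
  have hRt : ptd (fun t x => ptd u t x + a t x * pxd u t x) t x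
      = ptd (ptd u) t x + (ptd a t x * pxd u t x + a t x * ptd (pxd u) t x) :=
    ((hasDerivAt_ptd (hut (t, x))).add
      ((hasDerivAt_ptd (ha (t, x))).mul (hasDerivAt_ptd (hux (t, x))))).deriv
  have hRx : pxd (fun t x => ptd u t x + a t x * pxd u t x) t x
      = pxd (ptd u) t x + (pxd a t x * pxd u t x + a t x * pxd (pxd u) t x) :=
    ((hasDerivAt_pxd (hut (t, x))).add
      ((hasDerivAt_pxd (ha (t, x))).mul (hasDerivAt_pxd (hux (t, x))))).deriv
  have hflux : pxd (fun t x => a t x ^ 2 * pxd u t x) t x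
      = 2 * a t x * pxd a t x * pxd u t x + a t x ^ 2 * pxd (pxd u) t x := by
    refine (((hasDerivAt_pxd (ha (t, x))).fun_pow 2).mul
      (hasDerivAt_pxd (hux (t, x)))).deriv.trans ?_
    ring
  rw [hRt, hRx, hflux, ptd_pxd_comm hu]
  ring

lemma hasDerivAt_sqrt_const_add_mul_sq {a b s : ℝ} (h : 0 < a + b * s ^ 2) :
    HasDerivAt (fun s => √(a + b * s ^ 2)) (b * s / √(a + b * s ^ 2)) s := by
  have := (((hasDerivAt_pow 2 s).const_mul b).const_add a).sqrt h.ne'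
  convert this using 1
  field_simp
  ring

lemma wave_source_eq_riemannVariables {ι : Type*} [Fintype ι] (p q : ι → ℝ) {c : ℝ}
    (hc : c ≠ 0) (z : ℝ) :
    -(∑ j, p j ^ 2) + (2 * c ^ 2 - z) * ∑ j, q j ^ 2
      = 1 / (4 * c ^ 2) * ((c ^ 2 - z) * ((∑ j, (p j + c * q j) ^ 2) + ∑ j, (p j - c * q j) ^ 2)
          - 2 * (3 * c ^ 2 - z) * ∑ j, (p j + c * q j) * (p j - c * q j)) := by
  have hsq : (∑ j, (p j + c * q j) ^ 2) + ∑ j, (p j - c * q j) ^ 2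
      = 2 * ∑ j, p j ^ 2 + 2 * c ^ 2 * ∑ j, q j ^ 2 := by
    simp only [← Finset.sum_add_distrib, Finset.mul_sum]
    exact Finset.sum_congr rfl fun _ _ => by ring
  have hprod : ∑ j, (p j + c * q j) * (p j - c * q j)
      = ∑ j, p j ^ 2 - c ^ 2 * ∑ j, q j ^ 2 := by
    simp only [Finset.mul_sum, ← Finset.sum_sub_distrib]
    exact Finset.sum_congr rfl fun _ _ => by ring
  rw [hsq, hprod]
  field_simp
  ring

theorem stmt4_general (α γ : ℝ)
    (n : Fin 3 → ℝ → ℝ → ℝ)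
    (hsm : ∀ i, ContDiff ℝ 2 (Function.uncurry (n i)))
    (c : ℝ → ℝ) (hc : c = fun s => Real.sqrt (α + (γ - α) * s ^ 2))
    (hpos : ∀ t x, 0 < α + (γ - α) * (n 0 t x) ^ 2)
    (ζ : Fin 3 → ℝ)
    (hwave : ∀ i t x,
      ptd (fun t x => ptd (n i) t x) t x
        - pxd (fun t x => (c (n 0 t x)) ^ 2 * pxd (n i) t x) t x
      = (-(∑ j, (ptd (n j) t x) ^ 2)
          + (2 * (c (n 0 t x)) ^ 2 - ζ i) * (∑ j, (pxd (n j) t x) ^ 2)) * n i t x)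
    (R S : Fin 3 → ℝ → ℝ → ℝ)
    (hR : ∀ i t x, R i t x = ptd (n i) t x + c (n 0 t x) * pxd (n i) t x)
    (hS : ∀ i t x, S i t x = ptd (n i) t x - c (n 0 t x) * pxd (n i) t x)
    (cp : ℝ → ℝ) (hcp : ∀ s, cp s = (γ - α) * s / c s) :
    ∀ i t x,
      ptd (R i) t x - c (n 0 t x) * pxd (R i) t x
      = (1 / (4 * (c (n 0 t x)) ^ 2)) *
          (((c (n 0 t x)) ^ 2 - ζ i) * ((∑ j, (R j t x) ^ 2) + (∑ j, (S j t x) ^ 2))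
            - 2 * (3 * (c (n 0 t x)) ^ 2 - ζ i) * (∑ j, R j t x * S j t x)) * n i t x
        + (cp (n 0 t x) / (2 * c (n 0 t x))) * (R i t x - S i t x) * R 0 t x := by
  intro i t x
  have hc_deriv : ∀ s, 0 < α + (γ - α) * s ^ 2 → HasDerivAt c (cp s) s := fun s hs => by
    simpa only [hcp, hc] using hasDerivAt_sqrt_const_add_mul_sq hs
  have hn0 : Differentiable ℝ (uncurry (n 0)) := (hsm 0).differentiable (by simp)
  have ha : Differentiable ℝ (uncurry fun t x => c (n 0 t x)) := fun p =>
    (hc_deriv _ (hpos p.1 p.2)).differentiableAt.comp p (hn0 p)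
  have hc0 : c (n 0 t x) ≠ 0 := by
    rw [hc]
    exact (Real.sqrt_pos.mpr (hpos t x)).ne'
  obtain rfl : R = fun i t x => ptd (n i) t x + c (n 0 t x) * pxd (n i) t x :=
    funext fun i => funext fun t => funext (hR i t)
  obtain rfl : S = fun i t x => ptd (n i) t x - c (n 0 t x) * pxd (n i) t x :=
    funext fun i => funext fun t => funext (hS i t)
  rw [ptd_sub_mul_pxd_riemannVariable (hsm i) ha, hwave,
    ptd_comp (hc_deriv _ (hpos t x)) (hn0 _), pxd_comp (hc_deriv _ (hpos t x)) (hn0 _),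
    wave_source_eq_riemannVariables (fun j => ptd (n j) t x) (fun j => pxd (n j) t x) hc0]
  field_simp
  ring

/-- For a smooth solution n of the variational wave system
∂_tt n_i − ∂_x(c²(n₁)∂_x n_i) = (−|n_t|² + (2c²−ζ_i)|n_x|²) n_i with
c² = α + (γ−α)n₁², ζ₁ = γ, ζ₂ = ζ₃ = α, the backward Riemann variables
R = n_t + c n_x satisfy
∂_t R_i − c ∂_x R_i
  = (1/(4c²))((c²−ζ_i)(|R|²+|S|²) − 2(3c²−ζ_i)R·S) n_i + (c'/(2c))(R_i−S_i)R₁. -/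
theorem stmt4 (α γ : ℝ) (hα : 0 < α) (hγ : 0 < γ)
    (n : Fin 3 → ℝ → ℝ → ℝ)
    (hsm : ∀ i, ContDiff ℝ 2 (Function.uncurry (n i)))
    (c : ℝ → ℝ) (hc : c = fun s => Real.sqrt (α + (γ - α) * s ^ 2))
    (hpos : ∀ t x, 0 < α + (γ - α) * (n 0 t x) ^ 2)
    (ζ : Fin 3 → ℝ) (hζ0 : ζ 0 = γ) (hζ1 : ζ 1 = α) (hζ2 : ζ 2 = α)
    (hwave : ∀ i t x,
      ptd (fun t x => ptd (n i) t x) t x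
        - pxd (fun t x => (c (n 0 t x)) ^ 2 * pxd (n i) t x) t x
      = (-(∑ j, (ptd (n j) t x) ^ 2)
          + (2 * (c (n 0 t x)) ^ 2 - ζ i) * (∑ j, (pxd (n j) t x) ^ 2)) * n i t x)
    (R S : Fin 3 → ℝ → ℝ → ℝ)
    (hR : ∀ i t x, R i t x = ptd (n i) t x + c (n 0 t x) * pxd (n i) t x)
    (hS : ∀ i t x, S i t x = ptd (n i) t x - c (n 0 t x) * pxd (n i) t x)
    (cp : ℝ → ℝ) (hcp : ∀ s, cp s = (γ - α) * s / c s) :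
    ∀ i t x,
      ptd (R i) t x - c (n 0 t x) * pxd (R i) t x
      = (1 / (4 * (c (n 0 t x)) ^ 2)) *
          (((c (n 0 t x)) ^ 2 - ζ i) * ((∑ j, (R j t x) ^ 2) + (∑ j, (S j t x) ^ 2))
            - 2 * (3 * (c (n 0 t x)) ^ 2 - ζ i) * (∑ j, R j t x * S j t x)) * n i t x
        + (cp (n 0 t x) / (2 * c (n 0 t x))) * (R i t x - S i t x) * R 0 t x :=
  stmt4_general α γ n hsm c hc hpos ζ hwave R S hR hS cp hcp
end

section
/- Let I₀,…,I₅: [0,T] → [0,∞) be absolutely continuous functions and suppose there exist a constant C > 0, an integrable function G ≥ 0 on [0,T], nonnegative measurable 'dissipation' terms D_k, and index sets F_k^l, F_k^h ⊆ {0,…,5} with the relation k ↦ F_k^h acyclic, such that dI_k/dt ≤ C·Σ_{ℓ∈F_k^l}(I_ℓ + D_ℓ^{1/2}I_ℓ^{1/2}) + C·Σ_{ℓ∈F_k^h}(I_ℓ + D_ℓ) + G(t)I_k − D_k for a.e. t. Then there exist positive weights κ₀,…,κ₅ (chosen in a hierarchy compatible with the acyclic relation) such that W(t) := Σ_k κ_k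 I_k satisfies dW/dt ≤ a(t)W for an integrable function a, and hence W(t) ≤ W(0)·exp(∫₀ᵗ a(s)ds) for all t ∈ [0,T]. -/
/-!
Weight the functionals by `κ_k = B ^ ρ(k)`, where `ρ(k)` is the number of nodes reachable from `k`
in the acyclic graph with edges `l → k` for `l ∈ F_k^h`; thus `l ∈ F_k^h` forces `ρ k < ρ l`, and
for `B = 12 C + 1` the high-order dissipations `C Σ_{k : l ∈ F_k^h} κ_k D_l` are at most
`κ_l D_l / 2`. Young's inequality `C √D √I ≤ D / (2S) + (C² S / 2) I`, with `S = Σ κ_k ≥ 1`,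
makes the low-order ones at most `D_l / 2 ≤ κ_l D_l / 2`. So in `Σ κ_k I_k'` every dissipation
term is absorbed by `-κ_l D_l`, leaving `W' ≤ (M + G) W` for a constant `M`. Grönwall's
inequality follows since `W exp (-∫ (M + G))` is absolutely continuous with a.e. nonpositive
derivative.
-/

open MeasureTheory Set Filter Finset

namespace AbsolutelyContinuousOnInterval

theorem congr {E : Type*} [PseudoMetricSpace E] {f g : ℝ → E} {a b : ℝ}
    (hf : AbsolutelyContinuousOnInterval f a b) (hfg : EqOn f g (uIcc a b)) :
    AbsolutelyContinuousOnInterval g a b := by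
  refine Tendsto.congr' (eventually_inf_principal.mpr (Eventually.of_forall fun E hE => ?_)) hf
  refine sum_congr rfl fun i hi => ?_
  rw [hfg (hE.1 i hi).1, hfg (hE.1 i hi).2]

theorem _root_.LocallyLipschitz.comp_absolutelyContinuousOnInterval {E X : Type*}
    [SeminormedAddCommGroup E] [PseudoMetricSpace X] {g : E → X} {f : ℝ → E} {a b : ℝ}
    (hg : LocallyLipschitz g) (hf : AbsolutelyContinuousOnInterval f a b) :
    AbsolutelyContinuousOnInterval (g ∘ f) a b := by
  have hcpt : IsCompact (f '' uIcc a b) := isCompact_uIcc.image_of_continuousOn hf.continuousOn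
  obtain ⟨K, hK⟩ := LocallyLipschitzOn.exists_lipschitzOnWith_of_compact hcpt hg.locallyLipschitzOn
  refine squeeze_zero' (Eventually.of_forall fun E => sum_nonneg fun i _ => dist_nonneg)
    ?_ (by simpa using Tendsto.const_mul (K : ℝ) hf)
  refine eventually_inf_principal.mpr (Eventually.of_forall fun E hE => ?_)
  rw [mul_sum]
  exact sum_le_sum fun i hi =>
    hK.dist_le_mul _ (mem_image_of_mem f (hE.1 i hi).1) _ (mem_image_of_mem f (hE.1 i hi).2)

theorem _root_.absolutelyContinuousOnInterval_of_hasDerivAt {f f' : ℝ → ℝ} {a b : ℝ}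
    (hf : ∀ x ∈ uIcc a b, HasDerivAt f (f' x) x) (hf' : IntervalIntegrable f' volume a b) :
    AbsolutelyContinuousOnInterval f a b := by
  have hconst : AbsolutelyContinuousOnInterval (fun _ => f a) a b :=
    (LipschitzWith.const (f a)).lipschitzOnWith.absolutelyContinuousOnInterval
  refine (hconst.fun_add (hf'.absolutelyContinuousOnInterval_intervalIntegral left_mem_uIcc)).congr
    fun x hx => ?_
  show f a + ∫ y in a..x, f' y = f x
  have hsub : uIcc a x ⊆ uIcc a b := uIcc_subset_uIcc_left hx
  rw [intervalIntegral.integral_eq_sub_of_hasDerivAt (fun y hy => hf y (hsub hy))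
    (hf'.mono_set hsub)]
  ring

theorem le_mul_exp_integral_of_deriv_le {u c : ℝ → ℝ} {a b : ℝ} (hab : a ≤ b)
    (hu : AbsolutelyContinuousOnInterval u a b) (hc : IntervalIntegrable c volume a b)
    (h : ∀ᵐ t, t ∈ Icc a b → deriv u t ≤ c t * u t) :
    u b ≤ u a * Real.exp (∫ t in a..b, c t) := by
  set A : ℝ → ℝ := fun x => ∫ t in a..x, c t
  have hA : AbsolutelyContinuousOnInterval A a b :=
    hc.absolutelyContinuousOnInterval_intervalIntegral left_mem_uIcc
  have hV : AbsolutelyContinuousOnInterval (fun x => u x * Real.exp (-A x)) a b :=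
    hu.fun_mul (Real.contDiff_exp.locallyLipschitz.comp_absolutelyContinuousOnInterval hA.fun_neg)
  have hV' : ∀ᵐ t, t ∈ Ioc a b → deriv (fun x => u x * Real.exp (-A x)) t ≤ 0 := by
    filter_upwards [h, hu.ae_differentiableAt, hc.ae_hasDerivAt_integral] with t ht hut hAt htab
    have htab' : t ∈ Icc a b := Ioc_subset_Icc_self htab
    rw [uIcc_of_le hab] at hut hAt
    have hd : HasDerivAt (fun x => u x * Real.exp (-A x))
        (deriv u t * Real.exp (-A t) + u t * (Real.exp (-A t) * -c t)) t :=
      (hut htab').hasDerivAt.mul (hAt htab' a (left_mem_Icc.2 hab)).neg.exp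
    rw [hd.deriv]
    nlinarith [ht htab', Real.exp_pos (-A t)]
  have hmono : u b * Real.exp (-A b) ≤ u a := by
    have hnonpos := integral_nonpos_of_ae ((ae_restrict_iff' measurableSet_Ioc).2 hV')
    rw [← intervalIntegral.integral_of_le hab, hV.integral_deriv_eq_sub] at hnonpos
    simpa [A] using hnonpos
  calc u b = u b * Real.exp (-A b) * Real.exp (A b) := by
        rw [mul_assoc, ← Real.exp_add, neg_add_cancel, Real.exp_zero, mul_one]
    _ ≤ u a * Real.exp (A b) := by gcongr

end AbsolutelyContinuousOnInterval

theorem le_mul_exp_integral_of_hasDerivAt_of_le_mul {u u' c : ℝ → ℝ} {a b : ℝ}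
    (hu : ∀ t ∈ Icc a b, HasDerivAt u (u' t) t) (hu' : IntegrableOn u' (Icc a b))
    (hc : IntegrableOn c (Icc a b))
    (h : ∀ᵐ t ∂(volume.restrict (Icc a b)), u' t ≤ c t * u t) :
    ∀ t ∈ Icc a b, u t ≤ u a * Real.exp (∫ s in Ioc a t, c s) := by
  intro t ht
  have hsub : Icc a t ⊆ Icc a b := Icc_subset_Icc_right ht.2
  have hint : ∀ {f : ℝ → ℝ}, IntegrableOn f (Icc a b) → IntervalIntegrable f volume a t :=
    fun hf => (intervalIntegrable_iff_integrableOn_Icc_of_le ht.1).2 (hf.mono_set hsub)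
  have hAC : AbsolutelyContinuousOnInterval u a t :=
    absolutelyContinuousOnInterval_of_hasDerivAt
      (fun s hs => hu s (hsub (uIcc_of_le ht.1 ▸ hs))) (hint hu')
  rw [← intervalIntegral.integral_of_le ht.1]
  refine hAC.le_mul_exp_integral_of_deriv_le ht.1 (hint hc) ?_
  filter_upwards [(ae_restrict_iff' measurableSet_Icc).1 h] with s hs hst
  rw [(hu s (hsub hst)).deriv]
  exact hs (hsub hst)

theorem Relation.exists_rank_lt_of_acyclic {α : Type*} [Finite α] {r : α → α → Prop}
    (hr : ∀ a, ¬ TransGen r a a) : ∃ ρ : α → ℕ, ∀ a b, r a b → ρ b < ρ a :=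
  ⟨fun a => {c | TransGen r a c}.ncard, fun _ b hab => Set.ncard_lt_ncard
    ⟨fun _ hc => TransGen.head hab hc, fun hsub => hr b (hsub (TransGen.single hab))⟩
    (Set.toFinite _)⟩

theorem mul_sqrt_mul_sqrt_le {x y s : ℝ} (c : ℝ) (hx : 0 ≤ x) (hy : 0 ≤ y) (hs : 0 < s) :
    c * (√x * √y) ≤ x / (2 * s) + c ^ 2 * s / 2 * y := by
  have key : (√x - c * s * √y) ^ 2 = x - 2 * s * (c * (√x * √y)) + c ^ 2 * s ^ 2 * y := by
    rw [sub_sq, mul_pow, mul_pow, Real.sq_sqrt hx, Real.sq_sqrt hy]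
    ring
  rw [div_add' _ _ _ (by positivity), le_div_iff₀ (by positivity)]
  linear_combination sq_nonneg (√x - c * s * √y) + key

section CoupledInequalities

variable {ι : Type*} [Fintype ι] {C s g : ℝ} {Fl Fh : ι → Finset ι} {κ i i' d : ι → ℝ}

theorem exists_weights_of_acyclic [DecidableEq ι] (hC : 0 ≤ C)
    (hF : ∀ k, ¬ Relation.TransGen (fun a b => a ∈ Fh b) k k) :
    ∃ κ : ι → ℝ, (∀ k, 1 ≤ κ k) ∧ ∀ l, C * ∑ k ∈ univ.filter (fun k => l ∈ Fh k), κ k ≤ κ l := by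
  obtain ⟨ρ, hρ⟩ := Relation.exists_rank_lt_of_acyclic hF
  set B : ℝ := Fintype.card ι * C + 1 with hB
  have hB1 : 1 ≤ B := by
    have : 0 ≤ (Fintype.card ι : ℝ) * C := by positivity
    linarith
  refine ⟨fun k => B ^ ρ k, fun k => one_le_pow₀ hB1, fun l => ?_⟩
  have hstep : ∀ k ∈ univ.filter (fun k => l ∈ Fh k), B * B ^ ρ k ≤ B ^ ρ l := fun k hk => by
    rw [← pow_succ']
    exact pow_le_pow_right₀ hB1 (hρ l k (mem_filter.1 hk).2)
  have hcard : ((univ.filter (fun k => l ∈ Fh k)).card : ℝ) ≤ Fintype.card ι := by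
    exact_mod_cast card_filter_le _ _
  refine le_of_mul_le_mul_left ?_ (zero_lt_one.trans_le hB1)
  calc B * (C * ∑ k ∈ univ.filter (fun k => l ∈ Fh k), B ^ ρ k)
      = C * ∑ k ∈ univ.filter (fun k => l ∈ Fh k), B * B ^ ρ k := by
        rw [← mul_sum]; ring
    _ ≤ C * ((univ.filter (fun k => l ∈ Fh k)).card * B ^ ρ l) := by
        gcongr
        simpa using sum_le_card_nsmul _ _ _ hstep
    _ ≤ C * (Fintype.card ι * B ^ ρ l) := by gcongr
    _ ≤ B * B ^ ρ l := by rw [hB]; nlinarith [pow_nonneg (zero_le_one.trans hB1) (ρ l)]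

/-- The system of differential inequalities at a single time `t`, with `i = I(t)`, `i' = I'(t)`,
`d = D(t)` and `g = G(t)`. -/
def CoupledIneq (C : ℝ) (Fl Fh : ι → Finset ι) (i i' d : ι → ℝ) (g : ℝ) : Prop :=
  ∀ k, i' k ≤ C * ∑ l ∈ Fl k, (i l + √(d l) * √(i l)) + C * ∑ l ∈ Fh k, (i l + d l)
    + g * i k - d k

theorem CoupledIneq.le_add_dissipation (h : CoupledIneq C Fl Fh i i' d g) (hC : 0 ≤ C)
    (hs : 0 < s) (hi : ∀ l, 0 ≤ i l) (hd : ∀ l, 0 ≤ d l) (k : ι) :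
    i' k ≤ (2 * C + C ^ 2 * s / 2) * ∑ l, i l + g * i k
      + ((∑ l ∈ Fl k, d l) / (2 * s) + C * ∑ l ∈ Fh k, d l - d k) := by
  have hlow : C * ∑ l ∈ Fl k, (i l + √(d l) * √(i l))
      ≤ (C + C ^ 2 * s / 2) * ∑ l, i l + (∑ l ∈ Fl k, d l) / (2 * s) :=
    calc C * ∑ l ∈ Fl k, (i l + √(d l) * √(i l))
        ≤ ∑ l ∈ Fl k, ((C + C ^ 2 * s / 2) * i l + d l / (2 * s)) := by
          rw [mul_sum]
          refine sum_le_sum fun l _ => ?_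
          nlinarith [mul_sqrt_mul_sqrt_le C (hd l) (hi l) hs]
      _ = (C + C ^ 2 * s / 2) * ∑ l ∈ Fl k, i l + (∑ l ∈ Fl k, d l) / (2 * s) := by
          rw [sum_add_distrib, mul_sum, sum_div]
      _ ≤ (C + C ^ 2 * s / 2) * ∑ l, i l + (∑ l ∈ Fl k, d l) / (2 * s) := by
          gcongr _ * ?_ + _
          exact sum_le_univ_sum_of_nonneg hi
  have hhigh : C * ∑ l ∈ Fh k, (i l + d l) ≤ C * ∑ l, i l + C * ∑ l ∈ Fh k, d l := by
    rw [sum_add_distrib, mul_add]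
    gcongr C * ?_ + _
    exact sum_le_univ_sum_of_nonneg hi
  linarith [h k]

theorem Finset.sum_mul_sum_mem_eq_sum_filter_mul [DecidableEq ι] (F : ι → Finset ι)
    (κ x : ι → ℝ) :
    ∑ k, κ k * ∑ l ∈ F k, x l = ∑ l, (∑ k ∈ univ.filter (fun k => l ∈ F k), κ k) * x l := by
  simp only [mul_sum, sum_mul, sum_filter, ite_mul, zero_mul]
  rw [sum_comm]
  refine sum_congr rfl fun k _ => ?_
  rw [sum_ite_mem, univ_inter]

theorem sum_mul_dissipation_nonpos [Nonempty ι] [DecidableEq ι] (hκ1 : ∀ k, 1 ≤ κ k)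
    (hκ : ∀ l, 2 * C * ∑ k ∈ univ.filter (fun k => l ∈ Fh k), κ k ≤ κ l) (hd : ∀ l, 0 ≤ d l) :
    ∑ k, κ k * ((∑ l ∈ Fl k, d l) / (2 * ∑ j, κ j) + C * ∑ l ∈ Fh k, d l - d k) ≤ 0 := by
  set S := ∑ j, κ j
  have hS : 0 < S := sum_pos (fun k _ => zero_lt_one.trans_le (hκ1 k)) univ_nonempty
  have expand : ∀ k, κ k * ((∑ l ∈ Fl k, d l) / (2 * S) + C * ∑ l ∈ Fh k, d l - d k)
      = κ k / (2 * S) * ∑ l ∈ Fl k, d l + C * (κ k * ∑ l ∈ Fh k, d l) - κ k * d k := fun k => by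
    ring
  simp_rw [expand, sum_sub_distrib, sum_add_distrib, ← mul_sum,
    sum_mul_sum_mem_eq_sum_filter_mul, mul_sum, ← sum_add_distrib, ← sum_sub_distrib]
  refine sum_nonpos fun l _ => ?_
  have hlow : ∑ k ∈ univ.filter (fun k => l ∈ Fl k), κ k / (2 * S) ≤ 1 / 2 := by
    rw [← sum_div, div_le_div_iff₀ (by positivity) two_pos]
    have := sum_le_univ_sum_of_nonneg (s := univ.filter (fun k => l ∈ Fl k))
      (fun k => zero_le_one.trans (hκ1 k))
    linarith
  have hcoeff : ∑ k ∈ univ.filter (fun k => l ∈ Fl k), κ k / (2 * S)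
      + C * ∑ k ∈ univ.filter (fun k => l ∈ Fh k), κ k - κ l ≤ 0 := by
    linarith [hκ l, hκ1 l]
  nlinarith [mul_nonpos_of_nonpos_of_nonneg hcoeff (hd l)]

theorem CoupledIneq.weighted_sum_le [Nonempty ι] [DecidableEq ι]
    (h : CoupledIneq C Fl Fh i i' d g) (hC : 0 ≤ C) (hκ1 : ∀ k, 1 ≤ κ k)
    (hκ : ∀ l, 2 * C * ∑ k ∈ univ.filter (fun k => l ∈ Fh k), κ k ≤ κ l)
    (hi : ∀ l, 0 ≤ i l) (hd : ∀ l, 0 ≤ d l) :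
    ∑ k, κ k * i' k
      ≤ ((2 * C + C ^ 2 * (∑ j, κ j) / 2) * ∑ j, κ j + g) * ∑ k, κ k * i k := by
  set S := ∑ j, κ j
  set β := 2 * C + C ^ 2 * S / 2
  have hS : 0 < S := sum_pos (fun k _ => zero_lt_one.trans_le (hκ1 k)) univ_nonempty
  have hβ : 0 ≤ β := by positivity
  have hterm := fun k => mul_le_mul_of_nonneg_left (h.le_add_dissipation hC hS hi hd k)
    (zero_le_one.trans (hκ1 k))
  have hI : ∑ l, i l ≤ ∑ k, κ k * i k :=
    sum_le_sum fun l _ => le_mul_of_one_le_left (hi l) (hκ1 l)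
  calc ∑ k, κ k * i' k
      ≤ ∑ k, κ k * (β * ∑ l, i l + g * i k
          + ((∑ l ∈ Fl k, d l) / (2 * S) + C * ∑ l ∈ Fh k, d l - d k)) := sum_le_sum fun k _ => hterm k
    _ = β * S * ∑ l, i l + g * ∑ k, κ k * i k
          + ∑ k, κ k * ((∑ l ∈ Fl k, d l) / (2 * S) + C * ∑ l ∈ Fh k, d l - d k) := by
        simp only [mul_add, sum_add_distrib]
        congr 2
        · rw [← sum_mul]; ring
        · rw [mul_sum]; exact sum_congr rfl fun k _ => by ring
    _ ≤ β * S * ∑ k, κ k * i k + g * ∑ k, κ k * i k := by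
        linarith [sum_mul_dissipation_nonpos (Fl := Fl) hκ1 hκ hd,
          mul_le_mul_of_nonneg_left hI (mul_nonneg hβ hS.le)]
    _ = (β * S + g) * ∑ k, κ k * i k := by ring

end CoupledInequalities

theorem stmt16_general (T : ℝ) (C : ℝ) (hC : 0 < C)
    (I I' D : Fin 6 → ℝ → ℝ) (G : ℝ → ℝ)
    (Fl Fh : Fin 6 → Finset (Fin 6))
    (hIpos : ∀ k, ∀ t ∈ Set.Icc (0 : ℝ) T, 0 ≤ I k t)
    (hI : ∀ k, ∀ t ∈ Set.Icc (0 : ℝ) T, HasDerivAt (I k) (I' k t) t)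
    (hI'int : ∀ k, IntegrableOn (I' k) (Set.Icc 0 T))
    (hD : ∀ k t, 0 ≤ D k t)
    (hGint : IntegrableOn G (Set.Icc 0 T))
    (hacyc : ∀ k, ¬ Relation.TransGen (fun a b => a ∈ Fh b) k k)
    (hineq : ∀ᵐ t ∂(volume.restrict (Set.Icc (0 : ℝ) T)), ∀ k,
      I' k t ≤ C * ∑ l ∈ Fl k, (I l t + Real.sqrt (D l t) * Real.sqrt (I l t))
        + C * ∑ l ∈ Fh k, (I l t + D l t) + G t * I k t - D k t) :
    ∃ κ : Fin 6 → ℝ, (∀ k, 0 < κ k) ∧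
      ∃ a : ℝ → ℝ, IntegrableOn a (Set.Icc 0 T) ∧
        (∀ᵐ t ∂(volume.restrict (Set.Icc (0 : ℝ) T)),
          ∑ k, κ k * I' k t ≤ a t * ∑ k, κ k * I k t) ∧
        ∀ t ∈ Set.Icc (0 : ℝ) T,
          ∑ k, κ k * I k t
            ≤ (∑ k, κ k * I k 0) * Real.exp (∫ s in Set.Ioc (0 : ℝ) t, a s) := by
  obtain ⟨κ, hκ1, hκ⟩ := exists_weights_of_acyclic (by positivity : 0 ≤ 2 * C) hacyc
  set M := (2 * C + C ^ 2 * (∑ j, κ j) / 2) * ∑ j, κ j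
  have hae : ∀ᵐ t ∂(volume.restrict (Set.Icc (0 : ℝ) T)),
      ∑ k, κ k * I' k t ≤ (M + G t) * ∑ k, κ k * I k t := by
    filter_upwards [hineq, ae_restrict_mem measurableSet_Icc] with t hcoupled ht
    exact CoupledIneq.weighted_sum_le (i := (I · t)) hcoupled hC.le hκ1 hκ
      (fun l => hIpos l t ht) (fun l => hD l t)
  have ha : IntegrableOn (fun t => M + G t) (Set.Icc 0 T) :=
    (integrableOn_const measure_Icc_lt_top.ne).add hGint
  refine ⟨κ, fun k => zero_lt_one.trans_le (hκ1 k), _, ha, hae, ?_⟩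
  exact le_mul_exp_integral_of_hasDerivAt_of_le_mul
    (fun t ht => HasDerivAt.fun_sum fun k _ => (hI k t ht).const_mul (κ k))
    (integrable_finsetSum _ fun k _ => (hI'int k).const_mul (κ k)) ha hae

/-- Abstract weighted Grönwall lemma with an acyclic high-order coupling graph:
there exist positive weights κ_k such that W = Σ κ_k I_k satisfies
dW/dt ≤ a(t)W for an integrable a, hence W(t) ≤ W(0)·exp(∫₀ᵗ a). -/
theorem stmt16 (T : ℝ) (hT : 0 < T) (C : ℝ) (hC : 0 < C)
    (I I' D : Fin 6 → ℝ → ℝ) (G : ℝ → ℝ)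
    (Fl Fh : Fin 6 → Finset (Fin 6))
    (hIpos : ∀ k, ∀ t ∈ Set.Icc (0 : ℝ) T, 0 ≤ I k t)
    (hI : ∀ k, ∀ t ∈ Set.Icc (0 : ℝ) T, HasDerivAt (I k) (I' k t) t)
    (hI'int : ∀ k, IntegrableOn (I' k) (Set.Icc 0 T))
    (hD : ∀ k t, 0 ≤ D k t) (hDm : ∀ k, Measurable (D k))
    (hG : ∀ t, 0 ≤ G t) (hGint : IntegrableOn G (Set.Icc 0 T))
    (hacyc : ∀ k, ¬ Relation.TransGen (fun a b => a ∈ Fh b) k k)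
    (hineq : ∀ᵐ t ∂(volume.restrict (Set.Icc (0 : ℝ) T)), ∀ k,
      I' k t ≤ C * ∑ l ∈ Fl k, (I l t + Real.sqrt (D l t) * Real.sqrt (I l t))
        + C * ∑ l ∈ Fh k, (I l t + D l t) + G t * I k t - D k t) :
    ∃ κ : Fin 6 → ℝ, (∀ k, 0 < κ k) ∧
      ∃ a : ℝ → ℝ, IntegrableOn a (Set.Icc 0 T) ∧
        (∀ᵐ t ∂(volume.restrict (Set.Icc (0 : ℝ) T)),
          ∑ k, κ k * I' k t ≤ a t * ∑ k, κ k * I k t) ∧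
        ∀ t ∈ Set.Icc (0 : ℝ) T,
          ∑ k, κ k * I k t
            ≤ (∑ k, κ k * I k 0) * Real.exp (∫ s in Set.Ioc (0 : ℝ) t, a s) :=
  stmt16_general T C hC I I' D G Fl Fh hIpos hI hI'int hD hGint hacyc hineq
end
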